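/- The 2-category of graphs internal to categories, Grph(Cat) := [G, Cat] where G is the free-standing parallel pair, is cartesian closed. -/

import Mathlib

open CategoryTheory Limits

universe u

/-- The 2-category `Grph(Cat) = [G, Cat]` of graphs internal
to categories, where `G` is the free-standing parallel pair, is cartesian
closed. -/
theorem grphCat_cartesianClosed :
    Nonempty (MonoidalClosed (WalkingParallelPair ⥤ Cat.{u, u})) :=
  ⟨Functor.functorCategoryMonoidalClosed _ _⟩
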